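/- Let ℰ = {x ∈ ℝⁿ : Σᵢ (xᵢ/aᵢ)² ≤ 1} and for 0 < h ≤ aₙ let H_h⁻ = {x : xₙ ≥ aₙ - h}. Then vol_n(ℰ ∩ H_h⁻) ≥ (2^{(n+1)/2} vol_{n-1}(B₂^{n-1}) ∏_{i=1}^{n-1} aᵢ / ((n+1) aₙ^{(n-1)/2})) · h^{(n+1)/2} (1 - h/(2aₙ))^{(n-1)/2}. -/

import Mathlib

/-!
Write `A = aₙ` and `c = (2A - h) / A²`. On `A - h ≤ t ≤ A` the parabola `c (A - t)` lies below the
ellipse profile `1 - (t / A)²`, since the two agree at `t = A` and `t = A - h`. Hence the cap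
contains the paraboloid segment whose slice at height `t` is the `(n-1)`-dimensional ellipsoid with
semi-axes `√(c (A - t)) aᵢ`, and by Fubini that segment has volume
`∫_{A-h}^{A} (c (A - t))^{(n-1)/2} dt · ∏ aᵢ · vol(B₂^{n-1})`, which is exactly the claimed bound.
-/

open MeasureTheory Finset

theorem volume_setOf_sum_sq_le_one (ι : Type*) [Fintype ι] :
    volume {y : ι → ℝ | ∑ i, y i ^ 2 ≤ 1} = volume (Metric.ball (0 : EuclideanSpace ℝ ι) 1) := by
  rw [← Measure.addHaar_unitClosedBall_eq_addHaar_unitBall,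
    ← (EuclideanSpace.volume_preserving_symm_measurableEquiv_toLp ι).measure_preimage_equiv]
  congr 1
  ext x
  simp [EuclideanSpace.norm_eq, Real.sqrt_le_one]

theorem volume_setOf_sum_div_sq_le {ι : Type*} [Fintype ι] {b : ι → ℝ} (hb : ∀ i, 0 < b i)
    {s : ℝ} (hs : 0 < s) :
    volume {y : ι → ℝ | ∑ i, (y i / b i) ^ 2 ≤ s} =
      ENNReal.ofReal (s ^ (Fintype.card ι / 2 : ℝ) * ∏ i, b i) *
        volume (Metric.ball (0 : EuclideanSpace ℝ ι) 1) := by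
  classical
  have hd : ∀ i, 0 < √s * b i := fun i => mul_pos (Real.sqrt_pos.2 hs) (hb i)
  set L := Matrix.toLin' (Matrix.diagonal fun i => (√s * b i)⁻¹)
  have hdet : LinearMap.det L = (∏ i, (√s * b i))⁻¹ := by
    rw [LinearMap.det_toLin', Matrix.det_diagonal, Finset.prod_inv_distrib]
  have hpre : {y : ι → ℝ | ∑ i, (y i / b i) ^ 2 ≤ s} = L ⁻¹' {y | ∑ i, y i ^ 2 ≤ 1} := by
    ext y
    have : ∀ i, (L y i) ^ 2 = (y i / b i) ^ 2 / s := fun i => by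
      simp only [L, Matrix.toLin'_apply, Matrix.mulVec_diagonal]
      rw [mul_comm, ← div_eq_mul_inv, mul_comm, ← div_div, div_pow, Real.sq_sqrt hs.le]
    simp only [Set.mem_ofPred_eq, Set.mem_preimage, this, ← Finset.sum_div, div_le_one hs]
  rw [hpre,
    Measure.addHaar_preimage_linearMap _ (by simp [hdet, (hd _).ne', Finset.prod_ne_zero_iff]),
    volume_setOf_sum_sq_le_one, hdet, inv_inv, abs_of_pos (Finset.prod_pos fun i _ => hd i),
    Finset.prod_mul_distrib, Finset.prod_const, Finset.card_univ, ← Real.rpow_natCast,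
    Real.sqrt_eq_rpow, ← Real.rpow_mul hs.le, one_div_mul_eq_div]

theorem integral_Ico_mul_sub_rpow {c : ℝ} (hc : 0 ≤ c) (A : ℝ) {h : ℝ} (hh : 0 ≤ h) {r : ℝ}
    (hr : -1 < r) :
    ∫ t in Set.Ico (A - h) A, (c * (A - t)) ^ r = c ^ r * (h ^ (r + 1) / (r + 1)) := by
  rw [integral_Ico_eq_integral_Ioo, ← integral_Ioc_eq_integral_Ioo,
    ← intervalIntegral.integral_of_le (by linarith),
    intervalIntegral.integral_comp_sub_left (fun u => (c * u) ^ r), sub_self, sub_sub_cancel,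
    intervalIntegral.integral_congr (g := fun u => c ^ r * u ^ r) fun u hu =>
      Real.mul_rpow hc (Set.uIcc_of_le hh ▸ hu).1,
    intervalIntegral.integral_const_mul, integral_rpow (Or.inl hr),
    Real.zero_rpow (by linarith), sub_zero]

def paraboloidSegment {ι : Type*} [Fintype ι] (b : ι → ℝ) (c A h : ℝ) : Set (ℝ × (ι → ℝ)) :=
  {p | p.1 ∈ Set.Ico (A - h) A ∧ ∑ i, (p.2 i / b i) ^ 2 ≤ c * (A - p.1)}

theorem volume_paraboloidSegment {ι : Type*} [Fintype ι] {b : ι → ℝ} (hb : ∀ i, 0 < b i)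
    {c : ℝ} (hc : 0 < c) (A : ℝ) {h : ℝ} (hh : 0 ≤ h) :
    volume (paraboloidSegment b c A h) =
      ENNReal.ofReal (c ^ (Fintype.card ι / 2 : ℝ) *
          (h ^ (Fintype.card ι / 2 + 1 : ℝ) / (Fintype.card ι / 2 + 1)) * ∏ i, b i) *
        volume (Metric.ball (0 : EuclideanSpace ℝ ι) 1) := by
  set r : ℝ := Fintype.card ι / 2
  set S := paraboloidSegment b c A h
  have hS : MeasurableSet S := (measurable_fst measurableSet_Ico).inter <|
    measurableSet_le (f := fun p : ℝ × (ι → ℝ) => ∑ i, (p.2 i / b i) ^ 2) (by fun_prop)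
      (by fun_prop)
  have hfiber : ∀ t, volume (Prod.mk t ⁻¹' S) =
      (Set.Ico (A - h) A).indicator (fun t => ENNReal.ofReal ((c * (A - t)) ^ r)) t *
        (ENNReal.ofReal (∏ i, b i) * volume (Metric.ball (0 : EuclideanSpace ℝ ι) 1)) := by
    intro t
    by_cases ht : t ∈ Set.Ico (A - h) A
    · have hpos : 0 < c * (A - t) := mul_pos hc (sub_pos.2 ht.2)
      have : Prod.mk t ⁻¹' S = {y : ι → ℝ | ∑ i, (y i / b i) ^ 2 ≤ c * (A - t)} := by
        ext y
        simp only [S, paraboloidSegment, Set.mem_preimage, Set.mem_ofPred_eq, ht, true_and]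
      rw [this, volume_setOf_sum_div_sq_le hb hpos, Set.indicator_of_mem ht,
        ENNReal.ofReal_mul (by positivity), mul_assoc]
    · have : Prod.mk t ⁻¹' S = ∅ := by
        ext y
        simp only [S, paraboloidSegment, Set.mem_preimage, Set.mem_ofPred_eq, ht, false_and,
          Set.mem_empty_iff_false]
      rw [this, Set.indicator_of_notMem ht, measure_empty, zero_mul]
  have hnonneg : ∀ t ∈ Set.Ico (A - h) A, 0 ≤ (c * (A - t)) ^ r := fun t ht =>
    Real.rpow_nonneg (mul_nonneg hc.le (sub_nonneg.2 ht.2.le)) r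
  rw [Measure.volume_eq_prod, Measure.prod_apply hS, lintegral_congr hfiber,
    lintegral_mul_const _ ((by fun_prop : Measurable _).indicator measurableSet_Ico),
    lintegral_indicator measurableSet_Ico, ← ofReal_integral_eq_lintegral_ofReal
      ?_ ((ae_restrict_iff' measurableSet_Ico).2 (Filter.Eventually.of_forall hnonneg)),
    integral_Ico_mul_sub_rpow hc.le A hh (by linarith [show 0 ≤ r by positivity]), ← mul_assoc,
    ← ENNReal.ofReal_mul]
  · positivity
  · refine (Continuous.integrableOn_Icc ?_).mono_set Set.Ico_subset_Icc_self
    exact (by fun_prop : Continuous fun t => c * (A - t)).rpow_const fun _ => Or.inr (by positivity)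

theorem Fin.prod_univ_erase_last {M : Type*} [CommMonoid M] {m : ℕ} (f : Fin (m + 1) → M) :
    ∏ i ∈ univ.erase (Fin.last m), f i = ∏ i : Fin m, f i.castSucc := by
  rw [← compl_singleton, ← Fin.image_castSucc, prod_image (Fin.castSucc_injective m).injOn]

def EuclideanSpace.splitLast (m : ℕ) : EuclideanSpace ℝ (Fin (m + 1)) ≃ᵐ ℝ × (Fin m → ℝ) :=
  (MeasurableEquiv.toLp 2 _).symm.trans (MeasurableEquiv.piFinSuccAbove (fun _ => ℝ) (Fin.last m))

@[simp]
theorem EuclideanSpace.splitLast_apply {m : ℕ} (x : EuclideanSpace ℝ (Fin (m + 1))) :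
    splitLast m x = (x (Fin.last m), fun i => x i.castSucc) := by
  simp [splitLast, MeasurableEquiv.piFinSuccAbove_apply, Fin.init_def]

theorem EuclideanSpace.volume_preserving_splitLast (m : ℕ) : MeasurePreserving (splitLast m) :=
  (volume_preserving_symm_measurableEquiv_toLp _).trans
    (volume_preserving_piFinSuccAbove (fun _ => ℝ) (Fin.last m))

theorem mul_sub_le_one_sub_div_sq {A h t : ℝ} (hA : 0 < A) (ht : t ∈ Set.Icc (A - h) A) :
    (2 * A - h) / A ^ 2 * (A - t) ≤ 1 - (t / A) ^ 2 := by
  rw [div_pow, div_mul_eq_mul_div, one_sub_div (by positivity),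
    div_le_div_iff_of_pos_right (by positivity)]
  nlinarith [mul_nonneg (sub_nonneg.2 ht.2) (sub_nonneg.2 ht.1)]

theorem splitLast_preimage_paraboloidSegment_subset {m : ℕ} {a : Fin (m + 1) → ℝ}
    (hA : 0 < a (Fin.last m)) (h : ℝ) :
    EuclideanSpace.splitLast m ⁻¹'
        paraboloidSegment (fun i : Fin m => a i.castSucc)
          ((2 * a (Fin.last m) - h) / a (Fin.last m) ^ 2) (a (Fin.last m)) h ⊆
      {x | ∑ i, (x i / a i) ^ 2 ≤ 1} ∩ {x | a (Fin.last m) - h ≤ x (Fin.last m)} := by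
  rintro x ⟨ht, hx⟩
  simp only [EuclideanSpace.splitLast_apply] at ht hx
  refine ⟨?_, ht.1⟩
  have := mul_sub_le_one_sub_div_sq hA (Set.Ico_subset_Icc_self ht)
  simp only [Set.mem_ofPred_eq, Fin.sum_univ_castSucc]
  linarith

theorem ellipsoid_cap_coeff_eq {n r A h V P : ℝ} (hn : n = 2 * r + 1) (hA : 0 < A)
    (hh : h < 2 * A) :
    2 ^ ((n + 1) / 2) * V * P / ((n + 1) * A ^ ((n - 1) / 2)) *
        (h ^ ((n + 1) / 2) * (1 - h / (2 * A)) ^ ((n - 1) / 2)) =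
      ((2 * A - h) / A ^ 2) ^ r * (h ^ (r + 1) / (r + 1)) * P * V := by
  have h1 : (n + 1) / 2 = r + 1 := by rw [hn]; ring
  have h2 : (n - 1) / 2 = r := by rw [hn]; ring
  have hq : 0 ≤ 1 - h / (2 * A) := by rw [sub_nonneg, div_le_one (by positivity)]; exact hh.le
  have hc : (2 * A - h) / A ^ 2 = 2 * (1 - h / (2 * A)) / A := by field_simp
  rw [h1, h2, hn, hc, Real.div_rpow (by positivity) hA.le, Real.mul_rpow zero_le_two hq,
    Real.rpow_add_one two_ne_zero, show 2 * r + 1 + 1 = 2 * (r + 1) by ring]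
  simp only [div_eq_mul_inv, mul_inv]
  ring

/-- Lower bound for the volume of a cap of an ellipsoid with semi-axes `a 0, …, a (n-1)`,
cut off by the hyperplane `xₙ = aₙ - h`. -/
theorem ellipsoid_cap_volume_lower_bound
    (n : ℕ) (hn : 0 < n) (a : Fin n → ℝ) (ha : ∀ i, 0 < a i)
    (h : ℝ) (hh0 : 0 < h) (hha : h ≤ a ⟨n - 1, by omega⟩) :
    ENNReal.ofReal
        ((2 : ℝ) ^ (((n : ℝ) + 1) / 2) *
          (volume (Metric.ball (0 : EuclideanSpace ℝ (Fin (n - 1))) 1)).toReal *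
          (∏ i ∈ Finset.univ.erase (⟨n - 1, by omega⟩ : Fin n), a i) /
            (((n : ℝ) + 1) * a ⟨n - 1, by omega⟩ ^ (((n : ℝ) - 1) / 2)) *
          (h ^ (((n : ℝ) + 1) / 2) *
            (1 - h / (2 * a ⟨n - 1, by omega⟩)) ^ (((n : ℝ) - 1) / 2)))
      ≤ volume ({x : EuclideanSpace ℝ (Fin n) | ∑ i, (x i / a i) ^ 2 ≤ 1} ∩
          {x : EuclideanSpace ℝ (Fin n) | a ⟨n - 1, by omega⟩ - h ≤ x ⟨n - 1, by omega⟩}) := by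
  obtain ⟨m, rfl⟩ : ∃ m, n = m + 1 := ⟨n - 1, by omega⟩
  simp only [Nat.add_sub_cancel] at hha ⊢
  rw [show (⟨m, by omega⟩ : Fin (m + 1)) = Fin.last m from rfl] at hha ⊢
  have hA := ha (Fin.last m)
  set c := (2 * a (Fin.last m) - h) / a (Fin.last m) ^ 2
  have hc : 0 < c := div_pos (by linarith) (by positivity)
  calc _ = ENNReal.ofReal (c ^ (Fintype.card (Fin m) / 2 : ℝ) *
          (h ^ (Fintype.card (Fin m) / 2 + 1 : ℝ) / (Fintype.card (Fin m) / 2 + 1)) *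
            ∏ i : Fin m, a i.castSucc) * volume (Metric.ball (0 : EuclideanSpace ℝ (Fin m)) 1) := by
        have hdim : ((m + 1 : ℕ) : ℝ) = 2 * (Fintype.card (Fin m) / 2 : ℝ) + 1 := by
          rw [Fintype.card_fin]; push_cast; ring
        rw [Fin.prod_univ_erase_last, ellipsoid_cap_coeff_eq hdim hA (by linarith),
          ENNReal.ofReal_mul (mul_nonneg (mul_nonneg (Real.rpow_nonneg hc.le _) (by positivity))
            (prod_nonneg fun i _ => (ha _).le)), ENNReal.ofReal_toReal measure_ball_lt_top.ne]
    _ = volume (paraboloidSegment (fun i : Fin m => a i.castSucc) c (a (Fin.last m)) h) :=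
        (volume_paraboloidSegment (fun i => ha _) hc _ hh0.le).symm
    _ = volume (EuclideanSpace.splitLast m ⁻¹'
          paraboloidSegment (fun i : Fin m => a i.castSucc) c (a (Fin.last m)) h) :=
        ((EuclideanSpace.volume_preserving_splitLast m).measure_preimage_equiv _).symm
    _ ≤ _ := measure_mono (splitLast_preimage_paraboloidSegment_subset hA h)
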